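/- arXiv:2501.01167 — 2 statements merged into one kernel-verified Lean document; each statement's English description precedes it below -/
import Mathlib

section
/- Let λ > 1, a > 0, 1 ≤ p ≤ ∞, and r ∈ ℕ with r_λ − (1/λ)(1 − 1/p) > 0. Then there exists a constant c > 0 such that for every n ∈ ℕ the optimal weighted integration error satisfies the lower bound Int_n(𝐖^r_{p,w}(ℝ)) ≥ c n^{−r_λ + (1/λ)(1 − 1/p)}. -/
open MeasureTheory Real Set Filter
open scoped ENNReal NNReal

noncomputable section

/-- The Freud weight `w(x) = exp(-a |x|^λ)`. -/
def freudW (lamb a : ℝ) (x : ℝ) : ℝ := Real.exp (-(a * |x| ^ lamb))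

/-- Weighted `L_{p,w}` norm of `f` over a set `Ω` (sup norm for `p = ∞`). -/
def wLpNorm (w : ℝ → ℝ) (p : ℝ≥0∞) (f : ℝ → ℝ) (Ω : Set ℝ) : ℝ≥0∞ :=
  if p = ∞ then ⨆ x ∈ Ω, (‖f x * w x‖₊ : ℝ≥0∞)
  else (∫⁻ x in Ω, (‖f x * w x‖₊ : ℝ≥0∞) ^ p.toReal) ^ (1 / p.toReal)

/-- The weighted Sobolev norm built from the family of derivatives `D k`, `0 ≤ k ≤ r`. -/
def sobNorm (w : ℝ → ℝ) (p : ℝ≥0∞) (r : ℕ) (D : ℕ → ℝ → ℝ) : ℝ≥0∞ :=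
  if p = ∞ then ⨆ k ∈ Finset.range (r + 1), wLpNorm w ∞ (D k) Set.univ
  else (∑ k ∈ Finset.range (r + 1), wLpNorm w p (D k) Set.univ ^ p.toReal) ^ (1 / p.toReal)

/-- `D` is an admissible system of derivatives of `f = D 0` in the weighted Sobolev space
`W^r_{p,w}(ℝ)`: each `D k`, `k < r`, is (locally) absolutely continuous with a.e. derivative
`D (k+1)`, and all `D k`, `k ≤ r`, have finite weighted `L_p` norm. -/
def IsWSobolev (w : ℝ → ℝ) (p : ℝ≥0∞) (r : ℕ) (D : ℕ → ℝ → ℝ) : Prop :=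
  (∀ k ≤ r, wLpNorm w p (D k) Set.univ ≠ ⊤) ∧
  ∀ k < r, MeasureTheory.LocallyIntegrable (D (k + 1)) volume ∧
    ∀ x : ℝ, D k x = D k 0 + ∫ t in (0 : ℝ)..x, D (k + 1) t

/-- The unit ball of the weighted Sobolev space `W^r_{p,w}(ℝ)`. -/
def WBall (w : ℝ → ℝ) (p : ℝ≥0∞) (r : ℕ) : Set (ℝ → ℝ) :=
  {f | ∃ D : ℕ → ℝ → ℝ, D 0 = f ∧ IsWSobolev w p r D ∧ sobNorm w p r D ≤ 1}

/-- `δ_{λ,p,q}` (with the convention `1/∞ = 0`). -/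
def deltaE (lamb : ℝ) (p q : ℝ≥0∞) : ℝ :=
  if p ≤ q then (1 - 1 / lamb) * (p.toReal⁻¹ - q.toReal⁻¹)
  else (1 / lamb) * (q.toReal⁻¹ - p.toReal⁻¹)

/-- `r_λ = r (1 - 1/λ)`. -/
def rLam (lamb : ℝ) (r : ℕ) : ℝ := r * (1 - 1 / lamb)

/-- `r_{λ,p,q} = r_λ - δ_{λ,p,q}`. -/
def rLpq (lamb : ℝ) (p q : ℝ≥0∞) (r : ℕ) : ℝ := rLam lamb r - deltaE lamb p q

/-- `ν_λ = (2^{λ-1} Γ(λ)⁻¹ Γ(λ/2)²)^{1/λ}`. -/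
def nuLam (lamb : ℝ) : ℝ :=
  ((2 : ℝ) ^ (lamb - 1) * (Real.Gamma lamb)⁻¹ * Real.Gamma (lamb / 2) ^ 2) ^ (1 / lamb)

/-- The Mhaskar–Rakhmanov–Saff number `a_m = ν_λ m^{1/λ}`. -/
def aMRS (lamb : ℝ) (m : ℕ) : ℝ := nuLam lamb * (m : ℝ) ^ (1 / lamb)

/-- The mesh size `h_m = ρ a_m / m`. -/
def hStep (lamb ρ : ℝ) (m : ℕ) : ℝ := ρ * aMRS lamb m / m

/-- The symmetric cardinal B-spline of order `2ℓ`. -/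
def Mspline (ℓ : ℕ) (x : ℝ) : ℝ :=
  ((2 * ℓ - 1).factorial : ℝ)⁻¹ *
    ∑ k ∈ Finset.range (2 * ℓ + 1),
      (-1 : ℝ) ^ k * ((2 * ℓ).choose k : ℝ) * max 0 (x - (k : ℝ) + (ℓ : ℝ)) ^ (2 * ℓ - 1)

/-- The quasi-interpolation operator `Qf(x) = Σ_s Σ_{|j|≤j₀} λ(j) f(s-j) M(x-s)` reproduces
all polynomials of degree at most `2ℓ - 1`. -/
def Reproduces (lam : ℤ → ℝ) (j₀ ℓ : ℕ) : Prop :=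
  ∀ P : Polynomial ℝ, P.natDegree ≤ 2 * ℓ - 1 → ∀ x : ℝ,
    (∑' s : ℤ, ∑ j ∈ Finset.Icc (-(j₀ : ℤ)) (j₀ : ℤ),
      lam j * P.eval ((s : ℝ) - (j : ℝ)) * Mspline ℓ (x - (s : ℝ))) = P.eval x

/-- The truncated scaled B-spline quasi-interpolation operator `Q_{ρ,m}`. -/
def Qrm (lam : ℤ → ℝ) (j₀ ℓ : ℕ) (lamb ρ : ℝ) (m : ℕ) (f : ℝ → ℝ) (x : ℝ) : ℝ :=
  if |x| ≤ ρ * aMRS lamb m then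
    ∑ s ∈ Finset.Icc (-((m : ℤ) + ℓ - 1)) ((m : ℤ) + ℓ - 1),
      ∑ j ∈ Finset.Icc (-(j₀ : ℤ)) (j₀ : ℤ),
        lam j * f (((s - j : ℤ) : ℝ) * hStep lamb ρ m) *
          Mspline ℓ (x / hStep lamb ρ m - (s : ℝ))
  else 0

/-- `2^κ` with `κ = ⌈log₂(2ℓ) - 1⌉`. -/
def twoPowKappa (ℓ : ℕ) : ℝ := (2 : ℝ) ^ (⌈Real.logb 2 (2 * ℓ) - 1⌉ : ℤ)

/-- The truncated scaled B-spline interpolation operator `P_{ρ,m}`. -/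
def Prm (lam : ℤ → ℝ) (j₀ ℓ : ℕ) (lamb ρ : ℝ) (m : ℕ) (f : ℝ → ℝ) (x : ℝ) : ℝ :=
  if |x| ≤ ρ * aMRS lamb m then
    (∑ s ∈ Finset.Icc (-((m : ℤ) + ℓ - 1)) ((m : ℤ) + ℓ - 1),
      (Mspline ℓ 0)⁻¹ * f ((s : ℝ) * hStep lamb ρ m) *
        Mspline ℓ (twoPowKappa ℓ * (x / hStep lamb ρ m) - twoPowKappa ℓ * (s : ℝ)))
    + (∑ s ∈ Finset.Icc (-((m : ℤ) + ℓ - 1)) ((m : ℤ) + ℓ - 1),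
        ∑ j ∈ Finset.Icc (-(j₀ : ℤ)) (j₀ : ℤ),
          lam j * f (((s - j : ℤ) : ℝ) * hStep lamb ρ m) *
            Mspline ℓ (x / hStep lamb ρ m - (s : ℝ)))
    - ∑ s ∈ Finset.Icc (-((m : ℤ) + ℓ - 1)) ((m : ℤ) + ℓ - 1),
        ∑ j ∈ Finset.Icc (-(j₀ : ℤ)) (j₀ : ℤ),
          ∑ i ∈ Finset.Icc (s - (ℓ : ℤ)) (s + (ℓ : ℤ)),
            (Mspline ℓ 0)⁻¹ * lam j * Mspline ℓ ((i : ℝ) - (s : ℝ)) *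
              f (((s - j : ℤ) : ℝ) * hStep lamb ρ m) *
              Mspline ℓ (twoPowKappa ℓ * (x / hStep lamb ρ m) - twoPowKappa ℓ * (s : ℝ) - (i : ℝ))
  else 0

/-- The sampling `n`-width `ϱ_n(F, X)` where the error is measured by `err`. -/
def sampWidth (n : ℕ) (F : Set (ℝ → ℝ)) (err : (ℝ → ℝ) → ℝ≥0∞) : ℝ≥0∞ :=
  ⨅ (k : ℕ) (_ : k ≤ n) (ξ : Fin k → ℝ) (φ : Fin k → ℝ → ℝ),
    ⨆ f ∈ F, err (fun x => f x - ∑ i, f (ξ i) * φ i x)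

/-- The quantity `Int_n(F)` of optimal quadrature with at most `n` nodes for the weight `w`. -/
def IntWidth (n : ℕ) (F : Set (ℝ → ℝ)) (w : ℝ → ℝ) : ℝ≥0∞ :=
  ⨅ (k : ℕ) (_ : k ≤ n) (ξ : Fin k → ℝ) (μ : Fin k → ℝ),
    ⨆ f ∈ F, ENNReal.ofReal |(∫ x, f x * w x) - ∑ i, μ i * f (ξ i)|

/-- The discrete weighted norm `‖(c_s)_{|s|≤n}‖_{p,w,n}` at the nodes `x_s = s h`. -/
def discNorm (w : ℝ → ℝ) (h : ℝ) (p : ℝ≥0∞) (n : ℤ) (c : ℤ → ℝ) : ℝ≥0∞ :=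
  if p = ∞ then ⨆ s ∈ Finset.Icc (-n) n, (‖w ((s : ℝ) * h) * c s‖₊ : ℝ≥0∞)
  else (∑ s ∈ Finset.Icc (-n) n, (‖w ((s : ℝ) * h) * c s‖₊ : ℝ≥0∞) ^ p.toReal) ^ (1 / p.toReal)

/-- A spline `Σ_{|s|≤n} b_s M(x/h - s)` from the space `S_{ρ,m}` (with `n = m - ℓ`). -/
def splineOf (ℓ : ℕ) (h : ℝ) (n : ℤ) (b : ℤ → ℝ) (x : ℝ) : ℝ :=
  ∑ s ∈ Finset.Icc (-n) n, b s * Mspline ℓ (x / h - (s : ℝ))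

/-- `m(n)`: the largest integer `m` with `2(m + ℓ + j₀) - 1 ≤ n`. -/
def mOf (ℓ j₀ n : ℕ) : ℕ := (n + 1) / 2 - ℓ - j₀

end

/-!
A quadrature with `k ≤ n` nodes is fooled by a nonnegative function of the unit ball that
vanishes at all of its nodes. With `h = n^{1/λ - 1}` cut `[0, L]`, `L = 4 n^{1/λ}`, into `4n`
cells `[s h, (s + 1) h)`; at least `3n` of them contain no node. On each free cell put
`γ φ(x / h - s) / w(s h)` for a fixed bump `φ` supported in `(0, 1)`. Since
`λ L^{λ-1} h = λ 4^{λ-1}`, the weight varies by a bounded factor across a cell, so every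
derivative up to order `r` has weighted sup norm `≲ γ h^{-r}` and is supported in `[0, L]`.
With `C` bounding `|φ^{(j)}|` for `j ≤ r`, the choice `γ = h^r / ((r + 1) C L^{1/p})` puts the
function in the unit ball, and its weighted integral is `≳ n γ h ≍ n^{-r_λ + (1 - 1/p)/λ}`.
-/

noncomputable def cellBump : ContDiffBump (1 / 2 : ℝ) := ⟨1 / 8, 1 / 4, by norm_num, by norm_num⟩

lemma mem_Ioo_of_iteratedDeriv_cellBump_ne_zero {k : ℕ} {t : ℝ}
    (ht : iteratedDeriv k cellBump t ≠ 0) : t ∈ Ioo 0 1 := by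
  have hsupp : t ∈ tsupport cellBump := by
    by_contra hsupp
    refine ht ?_
    rw [iteratedDeriv_eq_iteratedFDeriv,
      image_eq_zero_of_notMem_tsupport fun h => hsupp (tsupport_iteratedFDeriv_subset k h)]
    rfl
  have hrOut : cellBump.rOut = 1 / 4 := rfl
  rw [cellBump.tsupport_eq, Real.closedBall_eq_Icc, hrOut] at hsupp
  exact ⟨by linarith [hsupp.1], by linarith [hsupp.2]⟩

lemma iteratedDeriv_cellBump_eq_zero (k : ℕ) {t : ℝ} (ht : t ∉ Ioo 0 1) :
    iteratedDeriv k cellBump t = 0 :=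
  not_imp_comm.1 mem_Ioo_of_iteratedDeriv_cellBump_ne_zero ht

lemma hasDerivAt_iteratedDeriv_cellBump (k : ℕ) (t : ℝ) :
    HasDerivAt (iteratedDeriv k cellBump) (iteratedDeriv (k + 1) cellBump t) t := by
  rw [iteratedDeriv_succ]
  exact ((cellBump.contDiff (n := ⊤).differentiable_iteratedDeriv k
    (by exact_mod_cast WithTop.coe_lt_top _)) t).hasDerivAt

lemma continuous_iteratedDeriv_cellBump (k : ℕ) : Continuous (iteratedDeriv k cellBump) :=
  continuous_iff_continuousAt.2 fun t => (hasDerivAt_iteratedDeriv_cellBump k t).continuousAt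

lemma exists_abs_iteratedDeriv_cellBump_le (r : ℕ) :
    ∃ C, 0 < C ∧ ∀ k ≤ r, ∀ t, |iteratedDeriv k cellBump t| ≤ C := by
  set F : ℝ → ℝ := fun t => ∑ k ∈ Finset.range (r + 1), |iteratedDeriv k cellBump t|
  have hF : Continuous F :=
    continuous_finsetSum _ fun k _ => (continuous_iteratedDeriv_cellBump k).abs
  have hFsupp : HasCompactSupport F := by
    refine HasCompactSupport.intro (isCompact_Icc (a := 0) (b := 1)) fun t ht => ?_
    refine Finset.sum_eq_zero fun k _ => ?_
    rw [iteratedDeriv_cellBump_eq_zero k fun h => ht (Ioo_subset_Icc_self h), abs_zero]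
  obtain ⟨C, hC⟩ := hF.bounded_above_of_compact_support hFsupp
  refine ⟨C + 1, by linarith [(norm_nonneg _).trans (hC 0)], fun k hk t => ?_⟩
  calc |iteratedDeriv k cellBump t| ≤ F t :=
        Finset.single_le_sum (f := fun k => |iteratedDeriv k cellBump t|)
          (fun _ _ => abs_nonneg _) (Finset.mem_range_succ_iff.2 hk)
    _ ≤ ‖F t‖ := Real.le_norm_self _
    _ ≤ C + 1 := by linarith [hC t]

section FreudWeight

variable {lamb a : ℝ}

lemma continuous_freudW (hlamb : 0 < lamb) : Continuous (freudW lamb a) :=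
  continuous_exp.comp (continuous_const.mul
    (continuous_abs.rpow_const fun _ => Or.inr hlamb.le)).neg

lemma freudW_of_nonneg {x : ℝ} (hx : 0 ≤ x) : freudW lamb a x = exp (-(a * x ^ lamb)) := by
  rw [freudW, abs_of_nonneg hx]

lemma rpow_sub_rpow_le_mul (hlamb : 1 ≤ lamb) {x y L : ℝ} (hy : 0 ≤ y) (hyx : y ≤ x)
    (hxL : x ≤ L) : x ^ lamb - y ^ lamb ≤ lamb * L ^ (lamb - 1) * (x - y) := by
  have hderiv : ∀ t ∈ interior (Icc 0 L), deriv (· ^ lamb) t ≤ lamb * L ^ (lamb - 1) := by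
    rw [interior_Icc]
    intro t ht
    rw [Real.deriv_rpow_const]
    gcongr
    · exact ht.1.le
    · exact ht.2.le
  have hdiff := Real.differentiable_rpow_const hlamb
  exact (convex_Icc 0 L).image_sub_le_mul_sub_of_deriv_le hdiff.continuous.continuousOn
    hdiff.differentiableOn hderiv y ⟨hy, hyx.trans hxL⟩ x ⟨hy.trans hyx, hxL⟩ hyx

lemma freudW_div_freudW_le_one (ha : 0 ≤ a) (hlamb : 0 ≤ lamb) {x y : ℝ} (hy : 0 ≤ y)
    (hyx : y ≤ x) : freudW lamb a x / freudW lamb a y ≤ 1 := by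
  rw [freudW_of_nonneg hy, freudW_of_nonneg (hy.trans hyx), div_le_one (exp_pos _), exp_le_exp]
  gcongr

lemma exp_le_freudW_div_freudW (ha : 0 ≤ a) (hlamb : 1 ≤ lamb) {x y L : ℝ} (hy : 0 ≤ y)
    (hyx : y ≤ x) (hxL : x ≤ L) :
    exp (-(a * (lamb * L ^ (lamb - 1) * (x - y)))) ≤ freudW lamb a x / freudW lamb a y := by
  rw [freudW_of_nonneg hy, freudW_of_nonneg (hy.trans hyx), le_div_iff₀ (exp_pos _), ← exp_add,
    exp_le_exp]
  nlinarith [rpow_sub_rpow_le_mul hlamb hy hyx hxL]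

end FreudWeight

section WeightedSobolev

variable {w : ℝ → ℝ} {p : ℝ≥0∞}

lemma wLpNorm_le_of_abs_le (hp : 1 ≤ p) {f : ℝ → ℝ} {M : ℝ} {s : Set ℝ} (hs : MeasurableSet s)
    (hbound : ∀ x, |f x * w x| ≤ M) (hsupp : ∀ x ∉ s, f x = 0) :
    wLpNorm w p f univ ≤ ENNReal.ofReal M * volume s ^ p.toReal⁻¹ := by
  have hnorm : ∀ x, (‖f x * w x‖₊ : ℝ≥0∞) ≤ ENNReal.ofReal M := fun x => by
    rw [← ENNReal.ofReal_coe_nnreal, coe_nnnorm, Real.norm_eq_abs]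
    exact ENNReal.ofReal_le_ofReal (hbound x)
  unfold wLpNorm
  split_ifs with hpt
  · simpa [hpt] using iSup₂_le fun x (_ : x ∈ univ) => hnorm x
  have hq : 0 < p.toReal := ENNReal.toReal_pos (zero_lt_one.trans_le hp).ne' hpt
  have hpointwise : ∀ x, (‖f x * w x‖₊ : ℝ≥0∞) ^ p.toReal
      ≤ s.indicator (fun _ => ENNReal.ofReal M ^ p.toReal) x := fun x => by
    by_cases hx : x ∈ s
    · rw [indicator_of_mem hx]
      exact ENNReal.rpow_le_rpow (hnorm x) hq.le
    · rw [indicator_of_notMem hx, hsupp x hx, zero_mul, nnnorm_zero, ENNReal.coe_zero,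
        ENNReal.zero_rpow_of_pos hq]
  calc (∫⁻ x in univ, (‖f x * w x‖₊ : ℝ≥0∞) ^ p.toReal) ^ (1 / p.toReal)
      ≤ (∫⁻ x, s.indicator (fun _ => ENNReal.ofReal M ^ p.toReal) x) ^ (1 / p.toReal) := by
        rw [Measure.restrict_univ]
        gcongr with x
        exact hpointwise x
    _ = ENNReal.ofReal M * volume s ^ p.toReal⁻¹ := by
        rw [lintegral_indicator_const hs, ENNReal.mul_rpow_of_nonneg _ _ (by positivity),
          ← ENNReal.rpow_mul, mul_one_div_cancel hq.ne', ENNReal.rpow_one, one_div]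

lemma sobNorm_le_one (hp : 1 ≤ p) {r : ℕ} {D : ℕ → ℝ → ℝ}
    (hD : ∀ k ≤ r, wLpNorm w p (D k) univ ≤ ((r : ℝ≥0∞) + 1)⁻¹) : sobNorm w p r D ≤ 1 := by
  have hinv : ((r : ℝ≥0∞) + 1)⁻¹ ≤ 1 := ENNReal.inv_le_one.2 le_add_self
  unfold sobNorm
  split_ifs with hpt
  · exact iSup₂_le fun k hk => hpt ▸ (hD k (Finset.mem_range_succ_iff.1 hk)).trans hinv
  have hq : 1 ≤ p.toReal := by
    simpa using ENNReal.toReal_mono hpt hp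
  calc (∑ k ∈ Finset.range (r + 1), wLpNorm w p (D k) univ ^ p.toReal) ^ (1 / p.toReal)
      ≤ (∑ _k ∈ Finset.range (r + 1), ((r : ℝ≥0∞) + 1)⁻¹) ^ (1 / p.toReal) := by
        gcongr with k hk
        exact (ENNReal.rpow_le_rpow (hD k (Finset.mem_range_succ_iff.1 hk)) (by positivity)).trans
          (ENNReal.rpow_le_self_of_le_one hinv hq)
    _ = 1 := by
        rw [Finset.sum_const, Finset.card_range, nsmul_eq_mul, Nat.cast_succ,
          ENNReal.mul_inv_cancel (by positivity) (by simp), ENNReal.one_rpow]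

lemma mem_WBall_of_hasDerivAt {r : ℕ} {D : ℕ → ℝ → ℝ}
    (hD : ∀ k x, HasDerivAt (D k) (D (k + 1) x) x) (hfin : ∀ k ≤ r, wLpNorm w p (D k) univ ≠ ⊤)
    (hnorm : sobNorm w p r D ≤ 1) : D 0 ∈ WBall w p r := by
  have hcont : ∀ k, Continuous (D k) := fun k =>
    continuous_iff_continuousAt.2 fun x => (hD k x).continuousAt
  refine ⟨D, rfl, ⟨hfin, fun k _ => ⟨(hcont (k + 1)).locallyIntegrable, fun x => ?_⟩⟩, hnorm⟩
  rw [intervalIntegral.integral_eq_sub_of_hasDerivAt (fun t _ => hD k t)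
    ((hcont (k + 1)).intervalIntegrable 0 x)]
  ring

end WeightedSobolev

lemma ofReal_le_IntWidth {n : ℕ} {F : Set (ℝ → ℝ)} {w : ℝ → ℝ} {ε : ℝ}
    (hfool : ∀ k ≤ n, ∀ ξ : Fin k → ℝ, ∃ f ∈ F, (∀ i, f (ξ i) = 0) ∧ ε ≤ ∫ x, f x * w x) :
    ENNReal.ofReal ε ≤ IntWidth n F w := by
  refine le_iInf₂ fun k hk => le_iInf₂ fun ξ μ => ?_
  obtain ⟨f, hf, hfξ, hε⟩ := hfool k hk ξ
  refine le_iSup₂_of_le f hf (ENNReal.ofReal_le_ofReal ?_)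
  simpa [hfξ] using hε.trans (le_abs_self _)

noncomputable def foolingDeriv (h : ℝ) (g : ℕ → ℝ) (S : Finset ℕ) (j : ℕ) (x : ℝ) : ℝ :=
  ∑ s ∈ S, g s / h ^ j * iteratedDeriv j cellBump (x / h - s)

section FoolingFunction

variable {h : ℝ} {g : ℕ → ℝ} {S : Finset ℕ}

lemma hasDerivAt_foolingDeriv (hh : h ≠ 0) (j : ℕ) (x : ℝ) :
    HasDerivAt (foolingDeriv h g S j) (foolingDeriv h g S (j + 1) x) x := by
  refine HasDerivAt.fun_sum fun s _ => ?_
  have hinner : HasDerivAt (fun y => y / h - s) (1 / h) x :=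
    ((hasDerivAt_id x).div_const h).sub_const (s : ℝ)
  refine (((hasDerivAt_iteratedDeriv_cellBump j _).comp x hinner).const_mul
    (g s / h ^ j)).congr_deriv ?_
  rw [pow_succ]
  field_simp

lemma mem_cell_of_iteratedDeriv_ne_zero (hh : 0 < h) {j s : ℕ} {x : ℝ}
    (hne : iteratedDeriv j cellBump (x / h - s) ≠ 0) : x ∈ Ioo (s * h) ((s + 1) * h) := by
  obtain ⟨h0, h1⟩ := mem_Ioo_of_iteratedDeriv_cellBump_ne_zero hne
  constructor
  · rw [← lt_div_iff₀ hh]; linarith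
  · rw [← div_lt_iff₀ hh]; linarith

lemma floor_eq_of_iteratedDeriv_ne_zero {j s : ℕ} {x : ℝ}
    (hne : iteratedDeriv j cellBump (x / h - s) ≠ 0) : ⌊x / h⌋₊ = s := by
  obtain ⟨h0, h1⟩ := mem_Ioo_of_iteratedDeriv_cellBump_ne_zero hne
  rw [Nat.floor_eq_iff (by linarith [(Nat.cast_nonneg s : (0 : ℝ) ≤ s)])]
  constructor <;> linarith

lemma foolingDeriv_eq_zero_of_floor_notMem {x : ℝ} (hx : ⌊x / h⌋₊ ∉ S) (j : ℕ) :
    foolingDeriv h g S j x = 0 :=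
  Finset.sum_eq_zero fun s hs => by
    by_cases hne : iteratedDeriv j cellBump (x / h - s) = 0
    · rw [hne, mul_zero]
    · exact absurd (floor_eq_of_iteratedDeriv_ne_zero hne ▸ hs) hx

lemma foolingDeriv_eq_zero_of_notMem_Icc (hh : 0 < h) {N : ℕ} (hS : S ⊆ Finset.range N)
    {x : ℝ} (hx : x ∉ Icc 0 (N * h)) (j : ℕ) : foolingDeriv h g S j x = 0 :=
  Finset.sum_eq_zero fun s hs => by
    by_cases hne : iteratedDeriv j cellBump (x / h - s) = 0
    · rw [hne, mul_zero]
    obtain ⟨hsx, hxs⟩ := mem_cell_of_iteratedDeriv_ne_zero hh hne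
    have hsN : (s : ℝ) + 1 ≤ N := by exact_mod_cast Finset.mem_range.1 (hS hs)
    exact absurd ⟨(by positivity : (0 : ℝ) ≤ s * h).trans hsx.le,
      hxs.le.trans (mul_le_mul_of_nonneg_right hsN hh.le)⟩ hx

lemma abs_foolingDeriv_mul_le {w : ℝ → ℝ} {r j : ℕ} {C γ : ℝ} (hh : 0 < h) (hh1 : h ≤ 1)
    (hj : j ≤ r) (hψ : ∀ t, |iteratedDeriv j cellBump t| ≤ C) (hγ : 0 ≤ γ)
    (hg : ∀ s ∈ S, ∀ x ∈ Ioo (s * h) ((s + 1) * h), |g s * w x| ≤ γ) (x : ℝ) :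
    |foolingDeriv h g S j x * w x| ≤ γ * C / h ^ r := by
  have hC : 0 ≤ C := (abs_nonneg _).trans (hψ 0)
  set s := ⌊x / h⌋₊
  by_cases hs : s ∈ S
  swap
  · rw [foolingDeriv_eq_zero_of_floor_notMem hs, zero_mul, abs_zero]
    positivity
  have hsingle : foolingDeriv h g S j x = g s / h ^ j * iteratedDeriv j cellBump (x / h - s) :=
    Finset.sum_eq_single_of_mem s hs fun b _ hb => by
      by_contra hne
      exact hb (floor_eq_of_iteratedDeriv_ne_zero (right_ne_zero_of_mul hne)).symm
  by_cases hne : iteratedDeriv j cellBump (x / h - s) = 0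
  · rw [hsingle, hne, mul_zero, zero_mul, abs_zero]
    positivity
  calc |foolingDeriv h g S j x * w x|
      = |g s * w x| * |iteratedDeriv j cellBump (x / h - s)| / h ^ j := by
        rw [hsingle, ← abs_mul, ← abs_of_pos (pow_pos hh j), ← abs_div, abs_of_pos (pow_pos hh j)]
        ring_nf
    _ ≤ γ * C / h ^ j := by
        gcongr
        exacts [hg s hs x (mem_cell_of_iteratedDeriv_ne_zero hh hne), hψ _]
    _ ≤ γ * C / h ^ r :=
        div_le_div_of_nonneg_left (by positivity) (pow_pos hh r)
          (pow_le_pow_of_le_one hh.le hh1 hj)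

lemma integral_sum_cellBump (hh : 0 < h) (S : Finset ℕ) :
    ∫ x, ∑ s ∈ S, cellBump (x / h - s) = S.card * (h * ∫ t, cellBump t) := by
  have hone : ∀ s : ℕ, ∫ x, cellBump (x / h - s) = h * ∫ t, cellBump t := fun s => by
    rw [Measure.integral_comp_div (fun y => cellBump (y - s)) h, integral_sub_right_eq_self,
      abs_of_pos hh, smul_eq_mul]
  rw [integral_finsetSum S fun s _ => (cellBump.integrable.comp_sub_right (s : ℝ)).comp_div hh.ne']
  simp [hone]

lemma le_integral_foolingDeriv_mul {w : ℝ → ℝ} (hw : Continuous w) {β : ℝ} {N : ℕ}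
    (hh : 0 < h) (hS : S ⊆ Finset.range N)
    (hg : ∀ s ∈ S, ∀ x ∈ Ioo (s * h) ((s + 1) * h), β ≤ g s * w x) :
    β * (S.card * (h * ∫ t, cellBump t)) ≤ ∫ x, foolingDeriv h g S 0 x * w x := by
  have hpointwise : ∀ x, β * ∑ s ∈ S, cellBump (x / h - s) ≤ foolingDeriv h g S 0 x * w x := by
    intro x
    rw [foolingDeriv, Finset.mul_sum, Finset.sum_mul]
    refine Finset.sum_le_sum fun s hs => ?_
    rw [pow_zero, div_one, iteratedDeriv_zero]
    by_cases hne : cellBump (x / h - s) = 0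
    · simp [hne]
    have hβ := hg s hs x
      (mem_cell_of_iteratedDeriv_ne_zero (j := 0) hh (by rwa [iteratedDeriv_zero]))
    nlinarith [cellBump.nonneg (x := x / h - s)]
  have hcont : Continuous (foolingDeriv h g S 0) :=
    continuous_iff_continuousAt.2 fun x => (hasDerivAt_foolingDeriv hh.ne' 0 x).continuousAt
  have hint : Integrable fun x => foolingDeriv h g S 0 x * w x := by
    refine (hcont.mul hw).integrable_of_hasCompactSupport
      (HasCompactSupport.intro (isCompact_Icc (a := 0) (b := N * h)) fun x hx => ?_)
    rw [Pi.mul_apply, foolingDeriv_eq_zero_of_notMem_Icc hh hS hx, zero_mul]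
  rw [← integral_sum_cellBump hh, ← integral_const_mul]
  refine integral_mono (Integrable.const_mul ?_ β) hint hpointwise
  exact integrable_finsetSum S fun s _ =>
    (cellBump.integrable.comp_sub_right (s : ℝ)).comp_div hh.ne'

lemma foolingDeriv_mem_WBall {w : ℝ → ℝ} {p : ℝ≥0∞} (hp : 1 ≤ p) {r N : ℕ} {C γ : ℝ}
    (hh : 0 < h) (hh1 : h ≤ 1) (hS : S ⊆ Finset.range N)
    (hψ : ∀ j ≤ r, ∀ t, |iteratedDeriv j cellBump t| ≤ C) (hγ : 0 ≤ γ)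
    (hg : ∀ s ∈ S, ∀ x ∈ Ioo (s * h) ((s + 1) * h), |g s * w x| ≤ γ)
    (hnorm : γ * C / h ^ r * (N * h) ^ p.toReal⁻¹ ≤ 1 / (r + 1)) :
    foolingDeriv h g S 0 ∈ WBall w p r := by
  have hC : 0 ≤ C := (abs_nonneg _).trans (hψ 0 (Nat.zero_le r) 0)
  have hLp : ∀ j ≤ r, wLpNorm w p (foolingDeriv h g S j) univ ≤ ((r : ℝ≥0∞) + 1)⁻¹ :=
    fun j hj => calc
      wLpNorm w p (foolingDeriv h g S j) univ
          ≤ ENNReal.ofReal (γ * C / h ^ r) * volume (Icc 0 (N * h)) ^ p.toReal⁻¹ :=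
        wLpNorm_le_of_abs_le hp measurableSet_Icc
          (abs_foolingDeriv_mul_le hh hh1 hj (hψ j hj) hγ hg)
          fun x hx => foolingDeriv_eq_zero_of_notMem_Icc hh hS hx j
      _ = ENNReal.ofReal (γ * C / h ^ r * (N * h) ^ p.toReal⁻¹) := by
        rw [Real.volume_Icc, sub_zero,
          ENNReal.ofReal_rpow_of_nonneg (by positivity) (by positivity),
          ← ENNReal.ofReal_mul (by positivity)]
      _ ≤ ENNReal.ofReal (1 / (r + 1)) := ENNReal.ofReal_le_ofReal hnorm
      _ = ((r : ℝ≥0∞) + 1)⁻¹ := by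
        rw [one_div, ENNReal.ofReal_inv_of_pos (by positivity)]
        exact_mod_cast congrArg Inv.inv (ENNReal.ofReal_natCast (r + 1))
  exact mem_WBall_of_hasDerivAt (hasDerivAt_foolingDeriv hh.ne')
    (fun j hj => ((hLp j hj).trans_lt (by simp)).ne) (sobNorm_le_one hp hLp)

end FoolingFunction

lemma div_freudW_mul_freudW_mem_Icc {lamb a : ℝ} (hlamb : 1 ≤ lamb) (ha : 0 ≤ a)
    {γ h L x y : ℝ} (hγ : 0 ≤ γ) (hy : 0 ≤ y) (hyx : y ≤ x) (hxh : x ≤ y + h) (hxL : x ≤ L) :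
    γ / freudW lamb a y * freudW lamb a x ∈
      Icc (γ * exp (-(a * (lamb * L ^ (lamb - 1) * h)))) γ := by
  rw [div_mul_eq_mul_div, mul_div_assoc]
  refine ⟨mul_le_mul_of_nonneg_left ((exp_le_exp.2 ?_).trans
    (exp_le_freudW_div_freudW ha hlamb hy hyx hxL)) hγ,
    mul_le_of_le_one_right hγ (freudW_div_freudW_le_one ha (by linarith) hy hyx)⟩
  have hL : 0 ≤ L := hy.trans (hyx.trans hxL)
  gcongr
  linarith

lemma three_mul_le_card_range_sdiff_image_floor {n k : ℕ} (hk : k ≤ n) (ξ : Fin k → ℝ) (h : ℝ) :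
    3 * n ≤ (Finset.range (4 * n) \ Finset.univ.image fun i => ⌊ξ i / h⌋₊).card := by
  have himage : (Finset.univ.image fun i => ⌊ξ i / h⌋₊).card ≤ k :=
    Finset.card_image_le.trans (by simp)
  have := Finset.le_card_sdiff (Finset.univ.image fun i => ⌊ξ i / h⌋₊) (Finset.range (4 * n))
  rw [Finset.card_range] at this
  omega

lemma toReal_inv_le_one {p : ℝ≥0∞} (hp : 1 ≤ p) : p.toReal⁻¹ ≤ 1 := by
  rcases eq_or_ne p ⊤ with rfl | hpt
  · simp
  · exact inv_le_one_of_one_le₀ (by simpa using ENNReal.toReal_mono hpt hp)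

lemma mul_rpow_sub_one {u : ℝ} (hu : 0 < u) (e : ℝ) : u * u ^ (e - 1) = u ^ e := by
  rw [rpow_sub hu, rpow_one]
  field_simp

noncomputable def freudMesh (lamb : ℝ) (n : ℕ) : ℝ := (n : ℝ) ^ (1 / lamb - 1)

section FreudMesh

variable {lamb : ℝ} {n : ℕ}

lemma freudMesh_pos (hn : 0 < n) : 0 < freudMesh lamb n := by
  unfold freudMesh
  positivity

lemma freudMesh_le_one (hlamb : 1 ≤ lamb) (hn : 0 < n) : freudMesh lamb n ≤ 1 :=
  rpow_le_one_of_one_le_of_nonpos (by exact_mod_cast hn)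
    (by rw [sub_nonpos, div_le_one (by linarith)]; exact hlamb)

lemma rpow_mul_freudMesh (hlamb : lamb ≠ 0) (hn : 0 < n) :
    (4 * n * freudMesh lamb n) ^ (lamb - 1) * freudMesh lamb n = 4 ^ (lamb - 1) := by
  have hu : (0 : ℝ) < n := by exact_mod_cast hn
  rw [freudMesh, mul_assoc, mul_rpow_sub_one hu, mul_rpow (by norm_num) (by positivity),
    ← rpow_mul hu.le, mul_assoc, ← rpow_add hu,
    show 1 / lamb * (lamb - 1) + (1 / lamb - 1) = 0 by field_simp; ring, rpow_zero, mul_one]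

lemma rpow_neg_le_freudMesh {q : ℝ} (r : ℕ) (hn : 0 < n) (hq1 : q ≤ 1) :
    (n : ℝ) ^ (-(rLam lamb r - 1 / lamb * (1 - q))) ≤
      4 * (n * freudMesh lamb n ^ (r + 1) / (4 * n * freudMesh lamb n) ^ q) := by
  have hu : (0 : ℝ) < n := by exact_mod_cast hn
  have hnum : n * freudMesh lamb n ^ (r + 1) = (n : ℝ) ^ (1 + (1 / lamb - 1) * (r + 1)) := by
    rw [freudMesh, ← rpow_natCast, ← rpow_mul hu.le, rpow_add hu, rpow_one]
    push_cast
    ring_nf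
  have hden : (4 * n * freudMesh lamb n) ^ q = 4 ^ q * (n : ℝ) ^ (1 / lamb * q) := by
    rw [freudMesh, mul_assoc, mul_rpow_sub_one hu, mul_rpow (by norm_num) (by positivity),
      ← rpow_mul hu.le]
  have h4 : (4 : ℝ) ^ q ≤ 4 := rpow_le_self_of_one_le (by norm_num) hq1
  rw [hnum, hden, mul_div_assoc', le_div_iff₀ (by positivity), mul_comm (4 ^ q), ← mul_assoc,
    ← rpow_add hu]
  calc (n : ℝ) ^ (-(rLam lamb r - 1 / lamb * (1 - q)) + 1 / lamb * q) * 4 ^ q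
      ≤ (n : ℝ) ^ (-(rLam lamb r - 1 / lamb * (1 - q)) + 1 / lamb * q) * 4 := by gcongr
    _ = 4 * (n : ℝ) ^ (1 + (1 / lamb - 1) * (r + 1)) := by
      rw [mul_comm, rLam]
      ring_nf

lemma div_freudW_mul_freudW_mem_Icc_of_mem_cell {a : ℝ} (hlamb : 1 < lamb) (ha : 0 ≤ a)
    (hn : 0 < n) {s : ℕ} (hs : s < 4 * n) {γ x : ℝ} (hγ : 0 ≤ γ)
    (hx : x ∈ Ioo (s * freudMesh lamb n) ((s + 1) * freudMesh lamb n)) :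
    γ / freudW lamb a (s * freudMesh lamb n) * freudW lamb a x ∈
      Icc (γ * exp (-(a * lamb * 4 ^ (lamb - 1)))) γ := by
  have hh := freudMesh_pos (lamb := lamb) hn
  have hsn : (s : ℝ) + 1 ≤ 4 * n := by exact_mod_cast hs
  have := div_freudW_mul_freudW_mem_Icc (h := freudMesh lamb n) (L := 4 * n * freudMesh lamb n)
    hlamb.le ha hγ (by positivity) hx.1.le (by linarith [hx.2])
    (hx.2.le.trans (mul_le_mul_of_nonneg_right hsn hh.le))
  rwa [mul_assoc lamb, rpow_mul_freudMesh (by linarith) hn, ← mul_assoc] at this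

end FreudMesh

theorem exists_freudW_fooling {lamb a : ℝ} (hlamb : 1 < lamb) (ha : 0 < a) {p : ℝ≥0∞}
    (hp : 1 ≤ p) {r : ℕ} {C : ℝ} (hC : 0 < C)
    (hψ : ∀ j ≤ r, ∀ t, |iteratedDeriv j cellBump t| ≤ C) {n k : ℕ} (hn : 0 < n) (hk : k ≤ n)
    (ξ : Fin k → ℝ) :
    ∃ f ∈ WBall (freudW lamb a) p r, (∀ i, f (ξ i) = 0) ∧
      3 * exp (-(a * lamb * 4 ^ (lamb - 1))) * (∫ t, cellBump t) / (4 * (r + 1) * C) *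
          (n : ℝ) ^ (-(rLam lamb r - 1 / lamb * (1 - p.toReal⁻¹)))
        ≤ ∫ x, f x * freudW lamb a x := by
  set h := freudMesh lamb n
  have hh : 0 < h := freudMesh_pos hn
  set L : ℝ := 4 * n * h
  set γ : ℝ := h ^ r / ((r + 1) * C * L ^ p.toReal⁻¹)
  have hγ : 0 < γ := by positivity
  set S := Finset.range (4 * n) \ Finset.univ.image fun i => ⌊ξ i / h⌋₊
  have hS : S ⊆ Finset.range (4 * n) := Finset.sdiff_subset
  set g : ℕ → ℝ := fun s => γ / freudW lamb a (s * h)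
  have hcell : ∀ s ∈ S, ∀ x ∈ Ioo (s * h) ((s + 1) * h),
      g s * freudW lamb a x ∈ Icc (γ * exp (-(a * lamb * 4 ^ (lamb - 1)))) γ :=
    fun s hs x hx => div_freudW_mul_freudW_mem_Icc_of_mem_cell hlamb ha.le hn
      (Finset.mem_range.1 (hS hs)) hγ.le hx
  have hcell_abs : ∀ s ∈ S, ∀ x ∈ Ioo (s * h) ((s + 1) * h), |g s * freudW lamb a x| ≤ γ := by
    intro s hs x hx
    obtain ⟨hlow, hup⟩ := hcell s hs x hx
    rwa [abs_of_nonneg ((by positivity : (0 : ℝ) ≤ _).trans hlow)]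
  have hnorm : γ * C / h ^ r * L ^ p.toReal⁻¹ = 1 / (r + 1) := by
    have : 0 < L ^ p.toReal⁻¹ := by positivity
    simp only [γ]
    field_simp
    exact div_self (by positivity)
  refine ⟨foolingDeriv h g S 0,
    foolingDeriv_mem_WBall hp hh (freudMesh_le_one hlamb.le hn) hS hψ hγ.le hcell_abs
      (by push_cast; exact hnorm.le),
    fun i => foolingDeriv_eq_zero_of_floor_notMem (by simp [S]) 0, ?_⟩
  have hI : 0 < ∫ t, cellBump t := cellBump.integral_pos
  have hcard : (3 * n : ℝ) ≤ S.card := by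
    exact_mod_cast three_mul_le_card_range_sdiff_image_floor hk ξ h
  have hmesh := rpow_neg_le_freudMesh (lamb := lamb) r hn (toReal_inv_le_one hp)
  calc 3 * exp (-(a * lamb * 4 ^ (lamb - 1))) * (∫ t, cellBump t) / (4 * (r + 1) * C) *
        (n : ℝ) ^ (-(rLam lamb r - 1 / lamb * (1 - p.toReal⁻¹)))
      ≤ 3 * exp (-(a * lamb * 4 ^ (lamb - 1))) * (∫ t, cellBump t) / (4 * (r + 1) * C) *
        (4 * (n * h ^ (r + 1) / L ^ p.toReal⁻¹)) := by gcongr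
    _ = γ * exp (-(a * lamb * 4 ^ (lamb - 1))) * (3 * n * (h * ∫ t, cellBump t)) := by
      simp only [γ]
      field_simp
      ring
    _ ≤ γ * exp (-(a * lamb * 4 ^ (lamb - 1))) * (S.card * (h * ∫ t, cellBump t)) := by gcongr
    _ ≤ ∫ x, foolingDeriv h g S 0 x * freudW lamb a x :=
      le_integral_foolingDeriv_mul (continuous_freudW (by linarith)) hh hS
        fun s hs x hx => (hcell s hs x hx).1

theorem stmt11_general (lamb a : ℝ) (hlamb : 1 < lamb) (ha : 0 < a)
    (p : ℝ≥0∞) (hp : 1 ≤ p) (r : ℕ) :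
    ∃ c : ℝ, 0 < c ∧ ∀ n : ℕ, 1 ≤ n →
      ENNReal.ofReal c * (n : ℝ≥0∞) ^ (-(rLam lamb r - (1 / lamb) * (1 - p.toReal⁻¹)))
        ≤ IntWidth n (WBall (freudW lamb a) p r) (freudW lamb a) := by
  obtain ⟨C, hC, hψ⟩ := exists_abs_iteratedDeriv_cellBump_le r
  have hI : 0 < ∫ t, cellBump t := cellBump.integral_pos
  refine ⟨3 * exp (-(a * lamb * 4 ^ (lamb - 1))) * (∫ t, cellBump t) / (4 * (r + 1) * C),
    by positivity, fun n hn => ?_⟩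
  rw [← ENNReal.ofReal_natCast, ENNReal.ofReal_rpow_of_pos (by exact_mod_cast hn),
    ← ENNReal.ofReal_mul (by positivity)]
  exact ofReal_le_IntWidth fun k hk ξ => exists_freudW_fooling hlamb ha hp hC hψ hn hk ξ

/-- Lower bound `Int_n(𝐖^r_{p,w}(ℝ)) ≥ c n^{-r_λ + (1/λ)(1 - 1/p)}`
for optimal Freud-weighted numerical integration on the unit ball of `W^r_{p,w}(ℝ)`. -/
theorem stmt11 (lamb a : ℝ) (hlamb : 1 < lamb) (ha : 0 < a)
    (p : ℝ≥0∞) (hp : 1 ≤ p) (r : ℕ) (hr : 1 ≤ r)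
    (hpos : 0 < rLam lamb r - (1 / lamb) * (1 - p.toReal⁻¹)) :
    ∃ c : ℝ, 0 < c ∧ ∀ n : ℕ, 1 ≤ n →
      ENNReal.ofReal c * (n : ℝ≥0∞) ^ (-(rLam lamb r - (1 / lamb) * (1 - p.toReal⁻¹)))
        ≤ IntWidth n (WBall (freudW lamb a) p r) (freudW lamb a) :=
  stmt11_general lamb a hlamb ha p hp r
end

section
/- Let λ > 1, a > 0, ℓ ∈ ℕ, and j₀ ≥ ℓ − 1 an integer. Then there exist a number ρ = ρ(a,λ,ℓ,j₀) with 0 < ρ < 1 and a constant C > 0 such that for every m ∈ ℕ, every integer k with 0 ≤ k ≤ m − 1, all integers s, i, j with |s − k| ≤ ℓ − 1, 0 ≤ i ≤ 2ℓ, |j| ≤ j₀, and every x ∈ [x_k, x_{k+1}], setting ξ := s + i − ℓ and η := s − j, one has (x − x_ξ)_+^{2ℓ−1} · w(x) ≤ C h_m^{2ℓ−1} · w(x_η). -/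
open MeasureTheory Real Set Filter
open scoped ENNReal NNReal

/-!
On `[x_k, x_{k+1}]` the node `x_ξ` lies at most `2ℓ` mesh steps to the left of `x`, so
`(x - x_ξ)_+^{2ℓ-1} ≤ (2ℓ h_m)^{2ℓ-1}`. The node `x_η` lies within `(ℓ + j₀) h_m` of `x`, and both
lie in `[-M, M]` with `M = (1 + ℓ + j₀) m h_m`. By the mean value theorem for `t ↦ t^λ`,
`|x_η|^λ - |x|^λ ≲ M^{λ-1} h_m`, and `(m h_m)^{λ-1} h_m = (ρ ν_λ)^λ` does not depend on `m`,
so `w(x)` and `w(x_η)` are comparable uniformly in `m`. Any `ρ ∈ (0, 1)` works.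
-/

theorem abs_rpow_sub_abs_rpow_le {p M u v : ℝ} (hp : 1 ≤ p) (hu : |u| ≤ M) (hv : |v| ≤ M) :
    |v| ^ p - |u| ^ p ≤ p * M ^ (p - 1) * |v - u| := by
  have hM : |(|v| ^ p - |u| ^ p)| ≤ p * M ^ (p - 1) * |(|v| - |u|)| := by
    refine Convex.norm_image_sub_le_of_norm_hasDerivWithin_le
      (f := fun t : ℝ => t ^ p) (f' := fun t => p * t ^ (p - 1))
      (fun t _ => (Real.hasDerivAt_rpow_const (Or.inr hp)).hasDerivWithinAt)
      (fun t ht => ?_) (convex_Icc 0 M) ⟨abs_nonneg u, hu⟩ ⟨abs_nonneg v, hv⟩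
    rw [Real.norm_eq_abs, abs_of_nonneg (by have := ht.1; positivity)]
    exact mul_le_mul_of_nonneg_left (Real.rpow_le_rpow ht.1 ht.2 (by linarith)) (by linarith)
  calc |v| ^ p - |u| ^ p ≤ |(|v| ^ p - |u| ^ p)| := le_abs_self _
    _ ≤ p * M ^ (p - 1) * |(|v| - |u|)| := hM
    _ ≤ p * M ^ (p - 1) * |v - u| :=
      mul_le_mul_of_nonneg_left (abs_abs_sub_abs_le_abs_sub v u)
        (mul_nonneg (by linarith) (Real.rpow_nonneg ((abs_nonneg u).trans hu) _))

theorem freudW_le_exp_mul_freudW {lamb a M x y : ℝ} (hlamb : 1 ≤ lamb) (ha : 0 ≤ a)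
    (hx : |x| ≤ M) (hy : |y| ≤ M) :
    freudW lamb a x ≤ Real.exp (a * (lamb * M ^ (lamb - 1) * |y - x|)) * freudW lamb a y := by
  rw [freudW, freudW, ← Real.exp_add, Real.exp_le_exp]
  nlinarith [mul_le_mul_of_nonneg_left (abs_rpow_sub_abs_rpow_le hlamb hx hy) ha]

theorem nuLam_pos {lamb : ℝ} (hlamb : 0 < lamb) : 0 < nuLam lamb := by
  have := Real.Gamma_pos_of_pos hlamb
  have := Real.Gamma_pos_of_pos (half_pos hlamb)
  unfold nuLam
  positivity

theorem hStep_pos {lamb ρ : ℝ} {m : ℕ} (hlamb : 0 < lamb) (hρ : 0 < ρ) (hm : 1 ≤ m) :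
    0 < hStep lamb ρ m := by
  have := nuLam_pos hlamb
  have : (0 : ℝ) < m := by exact_mod_cast hm
  unfold hStep aMRS
  positivity

theorem natCast_mul_hStep_rpow_mul_hStep {lamb ρ : ℝ} {m : ℕ} (hlamb : 0 < lamb) (hρ : 0 ≤ ρ)
    (hm : 1 ≤ m) :
    ((m : ℝ) * hStep lamb ρ m) ^ (lamb - 1) * hStep lamb ρ m = (ρ * nuLam lamb) ^ lamb := by
  have hν := (nuLam_pos hlamb).le
  have hm0 : (0 : ℝ) < m := by exact_mod_cast hm
  have hmh : (m : ℝ) * hStep lamb ρ m = ρ * nuLam lamb * (m : ℝ) ^ (1 / lamb) := by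
    unfold hStep aMRS; field_simp
  have hpos : 0 ≤ (m : ℝ) * hStep lamb ρ m := by rw [hmh]; positivity
  calc ((m : ℝ) * hStep lamb ρ m) ^ (lamb - 1) * hStep lamb ρ m
      = ((m : ℝ) * hStep lamb ρ m) ^ (lamb - 1 + 1) / m := by
        rw [Real.rpow_add_one' hpos (by linarith)]; field_simp
    _ = (ρ * nuLam lamb) ^ lamb := by
        rw [sub_add_cancel, hmh, Real.mul_rpow (by positivity) (by positivity),
          ← Real.rpow_mul hm0.le, one_div_mul_cancel hlamb.ne', Real.rpow_one,
          mul_div_cancel_right₀ _ hm0.ne']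

section Grid

variable {h x : ℝ} {ℓ j₀ : ℕ} {k s i j : ℤ}

theorem sub_node_le_of_mem_Icc (hh : 0 ≤ h) (hx : x ≤ ((k : ℝ) + 1) * h)
    (hs : |s - k| ≤ (ℓ : ℤ) - 1) (hi : 0 ≤ i) :
    x - ((s + i - ℓ : ℤ) : ℝ) * h ≤ 2 * ℓ * h := by
  have : ((k + 1 - (s + i - ℓ) : ℤ) : ℝ) ≤ 2 * ℓ := by
    exact_mod_cast (by linarith [(abs_le.mp hs).1] : k + 1 - (s + i - ℓ) ≤ 2 * (ℓ : ℤ))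
  push_cast at this ⊢
  nlinarith [mul_le_mul_of_nonneg_right this hh]

theorem abs_node_sub_le_of_mem_Icc (hh : 0 ≤ h)
    (hx : x ∈ Set.Icc ((k : ℝ) * h) (((k : ℝ) + 1) * h))
    (hs : |s - k| ≤ (ℓ : ℤ) - 1) (hj : |j| ≤ (j₀ : ℤ)) :
    |((s - j : ℤ) : ℝ) * h - x| ≤ (ℓ + j₀) * h := by
  obtain ⟨hs₁, hs₂⟩ := abs_le.mp hs
  obtain ⟨hj₁, hj₂⟩ := abs_le.mp hj
  have h₁ : ((s - j - k : ℤ) : ℝ) ≤ ℓ + j₀ := by exact_mod_cast (by linarith : s - j - k ≤ ℓ + j₀)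
  have h₂ : -((ℓ : ℝ) + j₀) ≤ ((s - j - (k + 1) : ℤ) : ℝ) := by
    exact_mod_cast (by linarith : -((ℓ : ℤ) + j₀) ≤ s - j - (k + 1))
  push_cast at h₁ h₂ ⊢
  rw [abs_le]
  constructor <;> nlinarith [hx.1, hx.2, mul_le_mul_of_nonneg_right h₁ hh,
    mul_le_mul_of_nonneg_right h₂ hh]

end Grid

theorem freudW_le_exp_mul_freudW_node {lamb a ρ x : ℝ} {ℓ j₀ m : ℕ} {k s j : ℤ}
    (hlamb : 1 < lamb) (ha : 0 ≤ a) (hρ : 0 < ρ) (hm : 1 ≤ m) (hk₀ : 0 ≤ k)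
    (hk₁ : k ≤ (m : ℤ) - 1) (hs : |s - k| ≤ (ℓ : ℤ) - 1) (hj : |j| ≤ (j₀ : ℤ))
    (hx : x ∈ Set.Icc ((k : ℝ) * hStep lamb ρ m) (((k : ℝ) + 1) * hStep lamb ρ m)) :
    freudW lamb a x ≤
      Real.exp (a * (lamb * (1 + (ℓ + j₀)) ^ (lamb - 1) * (ℓ + j₀) * (ρ * nuLam lamb) ^ lamb)) *
        freudW lamb a (((s - j : ℤ) : ℝ) * hStep lamb ρ m) := by
  set L : ℝ := ℓ + j₀
  set h := hStep lamb ρ m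
  set y := ((s - j : ℤ) : ℝ) * h
  have hh : 0 < h := hStep_pos (by linarith) hρ hm
  have hL : 0 ≤ L := by positivity
  have hm' : (1 : ℝ) ≤ m := by exact_mod_cast hm
  have hx_abs : |x| ≤ m * h := by
    have hk : (k : ℝ) + 1 ≤ m := by exact_mod_cast (by omega : k + 1 ≤ (m : ℤ))
    rw [abs_of_nonneg ((by positivity : (0 : ℝ) ≤ k * h).trans hx.1)]
    nlinarith [hx.2]
  have hyx : |y - x| ≤ L * h := abs_node_sub_le_of_mem_Icc hh.le hx hs hj
  have hx_M : |x| ≤ (1 + L) * (m * h) :=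
    hx_abs.trans (le_mul_of_one_le_left (by positivity) (by linarith))
  have hy_M : |y| ≤ (1 + L) * (m * h) := by
    nlinarith [abs_sub_abs_le_abs_sub y x, mul_le_mul_of_nonneg_left hm' (mul_nonneg hL hh.le)]
  have hexp : lamb * ((1 + L) * (m * h)) ^ (lamb - 1) * |y - x| ≤
      lamb * (1 + L) ^ (lamb - 1) * L * (ρ * nuLam lamb) ^ lamb := calc
    _ ≤ lamb * ((1 + L) * (m * h)) ^ (lamb - 1) * (L * h) := by gcongr
    _ = lamb * (1 + L) ^ (lamb - 1) * L * ((m * h) ^ (lamb - 1) * h) := by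
      rw [Real.mul_rpow (by positivity) (by positivity)]; ring
    _ = _ := by rw [natCast_mul_hStep_rpow_mul_hStep (by linarith) hρ.le hm]
  exact (freudW_le_exp_mul_freudW hlamb.le ha hx_M hy_M).trans <|
    mul_le_mul_of_nonneg_right (Real.exp_le_exp.mpr (mul_le_mul_of_nonneg_left hexp ha))
      (Real.exp_pos _).le

theorem stmt13_general (lamb a : ℝ) (hlamb : 1 < lamb) (ha : 0 < a)
    (ℓ : ℕ) (hℓ : 1 ≤ ℓ) (j₀ : ℕ) :
    ∃ ρ : ℝ, 0 < ρ ∧ ρ < 1 ∧ ∃ C : ℝ, 0 < C ∧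
      ∀ m : ℕ, 1 ≤ m → ∀ k s i j : ℤ,
        0 ≤ k → k ≤ (m : ℤ) - 1 → |s - k| ≤ (ℓ : ℤ) - 1 →
        0 ≤ i → i ≤ 2 * (ℓ : ℤ) → |j| ≤ (j₀ : ℤ) →
        ∀ x ∈ Set.Icc ((k : ℝ) * hStep lamb ρ m) (((k : ℝ) + 1) * hStep lamb ρ m),
          max 0 (x - ((s + i - ℓ : ℤ) : ℝ) * hStep lamb ρ m) ^ (2 * ℓ - 1) * freudW lamb a x
            ≤ C * hStep lamb ρ m ^ (2 * ℓ - 1) *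
              freudW lamb a (((s - j : ℤ) : ℝ) * hStep lamb ρ m) := by
  set B : ℝ := lamb * (1 + (ℓ + j₀ : ℝ)) ^ (lamb - 1) * (ℓ + j₀) * (1 / 2 * nuLam lamb) ^ lamb
  have hℓ' : (0 : ℝ) < 2 * ℓ := by norm_cast; omega
  refine ⟨1 / 2, by norm_num, by norm_num, (2 * ℓ) ^ (2 * ℓ - 1) * Real.exp (a * B),
    mul_pos (pow_pos hℓ' _) (Real.exp_pos _), ?_⟩
  intro m hm k s i j hk₀ hk₁ hs hi₀ _ hj x hx
  have hw := freudW_le_exp_mul_freudW_node hlamb ha.le (by norm_num) hm hk₀ hk₁ hs hj hx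
  set h := hStep lamb (1 / 2) m
  have hh : 0 < h := hStep_pos (by linarith) (by norm_num) hm
  have hξ : max 0 (x - ((s + i - ℓ : ℤ) : ℝ) * h) ^ (2 * ℓ - 1) ≤ (2 * ℓ * h) ^ (2 * ℓ - 1) :=
    pow_le_pow_left₀ (le_max_left _ _)
      (max_le (by positivity) (sub_node_le_of_mem_Icc hh.le hx.2 hs hi₀)) _
  calc _ ≤ (2 * ℓ * h) ^ (2 * ℓ - 1) *
        (Real.exp (a * B) * freudW lamb a (((s - j : ℤ) : ℝ) * h)) :=
      mul_le_mul hξ hw (Real.exp_pos _).le (by positivity)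
    _ = _ := by rw [mul_pow]; ring

/-- Key pointwise weight inequality: for a suitable `0 < ρ < 1`,
`(x - x_ξ)_+^{2ℓ-1} w(x) ≤ C h_m^{2ℓ-1} w(x_η)` for all `x ∈ [x_k, x_{k+1}]`, where
`ξ = s + i - ℓ`, `η = s - j`, `0 ≤ k ≤ m-1`, `|s-k| ≤ ℓ-1`, `0 ≤ i ≤ 2ℓ`, `|j| ≤ j₀`. -/
theorem stmt13 (lamb a : ℝ) (hlamb : 1 < lamb) (ha : 0 < a)
    (ℓ : ℕ) (hℓ : 1 ≤ ℓ) (j₀ : ℕ) (hj₀ : ℓ - 1 ≤ j₀) :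
    ∃ ρ : ℝ, 0 < ρ ∧ ρ < 1 ∧ ∃ C : ℝ, 0 < C ∧
      ∀ m : ℕ, 1 ≤ m → ∀ k s i j : ℤ,
        0 ≤ k → k ≤ (m : ℤ) - 1 → |s - k| ≤ (ℓ : ℤ) - 1 →
        0 ≤ i → i ≤ 2 * (ℓ : ℤ) → |j| ≤ (j₀ : ℤ) →
        ∀ x ∈ Set.Icc ((k : ℝ) * hStep lamb ρ m) (((k : ℝ) + 1) * hStep lamb ρ m),
          max 0 (x - ((s + i - ℓ : ℤ) : ℝ) * hStep lamb ρ m) ^ (2 * ℓ - 1) * freudW lamb a x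
            ≤ C * hStep lamb ρ m ^ (2 * ℓ - 1) *
              freudW lamb a (((s - j : ℤ) : ℝ) * hStep lamb ρ m) :=
  stmt13_general lamb a hlamb ha ℓ hℓ j₀
end
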